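/- Strengthened representation: every conceptual cumulative consequence relation equals |~_𝓜 for some strong conceptual cumulative model 𝓜, i.e., a conceptual cumulative model in which the relation ≺ is asymmetric and the set φ̂ has a minimum for every formula φ. -/
import Mathlib


namespace DR

/-- Formulas of the lattice-based language 𝓛: variables, ⊥, ⊤, ∧, ∨. -/
inductive Fm : Type where
  | var : ℕ → Fm
  | bot : Fm
  | top : Fm
  | and : Fm → Fm → Fm
  | or  : Fm → Fm → Fm

/-- A polarity (formal context) (A, X, I). -/
structure Polarity : Type 1 where
  Obj : Type
  Feat : Type
  I : Obj → Feat → Prop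

namespace Polarity

variable (P : Polarity)

def up (B : Set P.Obj) : Set P.Feat := {x | ∀ b ∈ B, P.I b x}
def dn (Y : Set P.Feat) : Set P.Obj := {a | ∀ y ∈ Y, P.I a y}

lemma subset_dn_up (B : Set P.Obj) : B ⊆ P.dn (P.up B) :=
  fun _ ha _ hx => hx _ ha

lemma subset_up_dn (Y : Set P.Feat) : Y ⊆ P.up (P.dn Y) :=
  fun _ hx _ ha => ha _ hx

lemma up_anti {B C : Set P.Obj} (h : B ⊆ C) : P.up C ⊆ P.up B :=
  fun _ hx b hb => hx b (h hb)

lemma dn_anti {Y Z : Set P.Feat} (h : Y ⊆ Z) : P.dn Z ⊆ P.dn Y :=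
  fun _ ha y hy => ha y (h hy)

end Polarity

/-- A formal concept of a polarity: a Galois-stable pair (extension, intension). -/
structure Concept (P : Polarity) : Type where
  ext : Set P.Obj
  int : Set P.Feat
  up_ext : P.up ext = int
  dn_int : P.dn int = ext

namespace Concept

variable {P : Polarity}

/-- Lattice meet of concepts: extensions intersect. -/
def meet (c d : Concept P) : Concept P where
  ext := c.ext ∩ d.ext
  int := P.up (c.ext ∩ d.ext)
  up_ext := rfl
  dn_int := by
    apply Set.Subset.antisymm
    · intro a ha
      constructor
      · rw [← c.dn_int]
        intro y hy
        apply ha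
        rw [← c.up_ext] at hy
        exact P.up_anti Set.inter_subset_left hy
      · rw [← d.dn_int]
        intro y hy
        apply ha
        rw [← d.up_ext] at hy
        exact P.up_anti Set.inter_subset_right hy
    · exact P.subset_dn_up _

/-- Lattice join of concepts: intensions intersect. -/
def join (c d : Concept P) : Concept P where
  ext := P.dn (c.int ∩ d.int)
  int := c.int ∩ d.int
  up_ext := by
    apply Set.Subset.antisymm
    · intro x hx
      constructor
      · rw [← c.up_ext]
        intro b hb
        apply hx
        rw [← c.dn_int] at hb
        exact P.dn_anti Set.inter_subset_left hb
      · rw [← d.up_ext]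
        intro b hb
        apply hx
        rw [← d.dn_int] at hb
        exact P.dn_anti Set.inter_subset_right hb
    · exact P.subset_up_dn _
  dn_int := rfl

/-- The greatest concept. -/
def top (P : Polarity) : Concept P where
  ext := Set.univ
  int := P.up Set.univ
  up_ext := rfl
  dn_int := Set.eq_univ_of_univ_subset (P.subset_dn_up _)

/-- The least concept. -/
def bot (P : Polarity) : Concept P where
  ext := P.dn Set.univ
  int := Set.univ
  up_ext := Set.eq_univ_of_univ_subset (P.subset_up_dn _)
  dn_int := rfl

end Concept

/-- A polarity-based model: a polarity with a valuation of variables into concepts. -/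
structure Model : Type 1 where
  P : Polarity
  V : ℕ → Concept P

namespace Model

/-- Homomorphic extension of the valuation to all formulas. -/
def interp (M : Model) : Fm → Concept M.P
  | .var n => M.V n
  | .bot => Concept.bot M.P
  | .top => Concept.top M.P
  | .and φ ψ => Concept.meet (M.interp φ) (M.interp ψ)
  | .or φ ψ => Concept.join (M.interp φ) (M.interp ψ)

/-- M, a ⊩ φ : the object a is in the extension of φ. -/
def objSat (M : Model) (a : M.P.Obj) (φ : Fm) : Prop := a ∈ (M.interp φ).ext

/-- M, x ≻ φ : the feature x is in the intension of φ. -/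
def featSat (M : Model) (x : M.P.Feat) (φ : Fm) : Prop := x ∈ (M.interp φ).int

end Model

/-- Validity of the sequent φ ⊢ ψ: in every polarity-based model the
extension of φ is contained in the extension of ψ. -/
def SeqValid (φ ψ : Fm) : Prop :=
  ∀ M : Model, (M.interp φ).ext ⊆ (M.interp ψ).ext

/-- A conceptual cumulative consequence relation: reflexive and closed
under (LLE), (RW), (CM) and (Cut). -/
structure IsCumulative (R : Fm → Fm → Prop) : Prop where
  refl : ∀ φ, R φ φ
  lle : ∀ φ ψ χ, SeqValid φ ψ → SeqValid ψ φ → R φ χ → R ψ χ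
  rw : ∀ φ ψ χ, SeqValid φ ψ → R χ φ → R χ ψ
  cm : ∀ φ ψ χ, R φ ψ → R φ χ → R (Fm.and φ ψ) χ
  cut : ∀ φ ψ χ, R (Fm.and φ ψ) χ → R φ ψ → R φ χ

/-- Closure under the rule (Loop). -/
def LoopClosed (R : Fm → Fm → Prop) : Prop :=
  ∀ (n : ℕ) (φ : ℕ → Fm),
    (∀ i < n, R (φ i) (φ (i + 1))) → R (φ n) (φ 0) → R (φ 0) (φ n)

/-- A pointed polarity-based model. -/
structure PointedModel : Type 1 where
  M : Model
  pt : M.P.Obj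

/-- Satisfaction at a pointed model. -/
def PointedModel.sat (Ma : PointedModel) (φ : Fm) : Prop := Ma.M.objSat Ma.pt φ

/-- A pointed model is normal for φ iff it satisfies every plausible consequence of φ. -/
def NormalFor (R : Fm → Fm → Prop) (Ma : PointedModel) (φ : Fm) : Prop :=
  ∀ ψ, R φ ψ → Ma.sat ψ

/-- A pointed model is supernormal for φ. -/
def SupernormalFor (R : Fm → Fm → Prop) (Ma : PointedModel) (φ : Fm) : Prop :=
  ∀ ψ, R φ ψ ↔ Ma.sat ψ

/-- A frame (S, l, ≺): states labelled by sets of pointed polarity-based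
models with a preference relation. -/
structure Frame : Type 2 where
  S : Type
  l : S → Set PointedModel
  prec : S → S → Prop

/-- t is minimal in P (w.r.t. prec). -/
def MinimalIn {α : Type _} (prec : α → α → Prop) (P : Set α) (t : α) : Prop :=
  t ∈ P ∧ ∀ s ∈ P, ¬ prec s t

/-- t is a minimum of P (w.r.t. prec). -/
def IsMinimum {α : Type _} (prec : α → α → Prop) (P : Set α) (t : α) : Prop :=
  t ∈ P ∧ ∀ s ∈ P, s ≠ t → prec t s

/-- P is smooth (w.r.t. prec). -/
def Smooth {α : Type _} (prec : α → α → Prop) (P : Set α) : Prop :=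
  ∀ t ∈ P, MinimalIn prec P t ∨ ∃ s, MinimalIn prec P s ∧ prec s t

namespace Frame

/-- s ⊨ φ : every pointed model in l(s) satisfies φ. -/
def stateSat (F : Frame) (s : F.S) (φ : Fm) : Prop :=
  ∀ Ma ∈ F.l s, Ma.sat φ

/-- φ̂ : the set of states satisfying φ. -/
def hat (F : Frame) (φ : Fm) : Set F.S := {s | F.stateSat s φ}

/-- A conceptual cumulative model: φ̂ is smooth for every φ. -/
def IsCumulativeModel (F : Frame) : Prop :=
  ∀ φ : Fm, Smooth F.prec (F.hat φ)

/-- The consequence relation |~_𝓜 defined by a frame: every state minimal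
in φ̂ belongs to ψ̂. -/
def conseq (F : Frame) (φ ψ : Fm) : Prop :=
  ∀ s, MinimalIn F.prec (F.hat φ) s → s ∈ F.hat ψ

/-- Replace the preference relation of a frame. -/
def withPrec (F : Frame) (p : F.S → F.S → Prop) : Frame := ⟨F.S, F.l, p⟩

end Frame

/-- The equivalence class φ/∼ of φ under ∼ (φ ∼ ψ iff φ |~ ψ and ψ |~ φ). -/
def cls (R : Fm → Fm → Prop) (φ : Fm) : Set Fm := {ψ | R φ ψ ∧ R ψ φ}

/-- φ/∼ ≤ ψ/∼ : there is χ ∈ φ/∼ with ψ |~ χ (ψ any representative of ψ/∼). -/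
def clsLE (R : Fm → Fm → Prop) (C D : Set Fm) : Prop :=
  ∃ χ ∈ C, ∃ ψ ∈ D, R ψ χ

/-- The canonical model of a consequence relation: states are the
equivalence classes φ/∼, labelled by the normal pointed models for φ,
with φ/∼ ≺ ψ/∼ iff φ/∼ ≤ ψ/∼ and φ/∼ ≠ ψ/∼. -/
def canonicalFrame (R : Fm → Fm → Prop) : Frame where
  S := {C : Set Fm // ∃ φ, C = cls R φ}
  l := fun s => {Ma | ∃ φ, s.val = cls R φ ∧ NormalFor R Ma φ}
  prec := fun s t => clsLE R s.val t.val ∧ s ≠ t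

/-- The state φ/∼ of the canonical model. -/
def canonicalState (R : Fm → Fm → Prop) (φ : Fm) : (canonicalFrame R).S :=
  ⟨cls R φ, φ, rfl⟩


/-! ### Auxiliary development for the strong representation theorem -/

section AuxSeq

lemma seq_refl (φ : Fm) : SeqValid φ φ := fun _ => le_refl _

lemma seq_trans {a b c : Fm} (h1 : SeqValid a b) (h2 : SeqValid b c) :
    SeqValid a c := fun M x hx => h2 M (h1 M hx)

lemma seq_top (φ : Fm) : SeqValid φ Fm.top := fun _ _ _ => trivial

lemma seq_and_left (φ ψ : Fm) : SeqValid (Fm.and φ ψ) φ :=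
  fun _ _ ha => ha.1

lemma seq_and_right (φ ψ : Fm) : SeqValid (Fm.and φ ψ) ψ :=
  fun _ _ ha => ha.2

lemma seq_le_and {χ φ ψ : Fm} (h1 : SeqValid χ φ) (h2 : SeqValid χ ψ) :
    SeqValid χ (Fm.and φ ψ) :=
  fun M _ ha => ⟨h1 M ha, h2 M ha⟩

lemma seq_and_comm (φ ψ : Fm) : SeqValid (Fm.and φ ψ) (Fm.and ψ φ) :=
  fun _ _ ha => ⟨ha.2, ha.1⟩

/-- Galois fact: extension containment implies reverse intension containment. -/
lemma int_anti {P : Polarity} {c d : Concept P} (h : c.ext ⊆ d.ext) :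
    d.int ⊆ c.int := by
  rw [← c.up_ext, ← d.up_ext]
  exact P.up_anti h

lemma seq_left_le_or (φ ψ : Fm) : SeqValid φ (Fm.or φ ψ) := by
  intro M a ha y hy
  have : y ∈ (M.interp φ).int := hy.1
  rw [← (M.interp φ).up_ext] at this
  exact this a ha

lemma seq_right_le_or (φ ψ : Fm) : SeqValid ψ (Fm.or φ ψ) := by
  intro M a ha y hy
  have : y ∈ (M.interp ψ).int := hy.2
  rw [← (M.interp ψ).up_ext] at this
  exact this a ha

lemma seq_or_le {φ ψ χ : Fm} (h1 : SeqValid φ χ) (h2 : SeqValid ψ χ) :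
    SeqValid (Fm.or φ ψ) χ := by
  intro M a ha
  have hi : (M.interp χ).int ⊆ (M.interp φ).int ∩ (M.interp ψ).int :=
    fun y hy => ⟨int_anti (h1 M) hy, int_anti (h2 M) hy⟩
  have : a ∈ M.P.dn (M.interp χ).int := fun y hy => ha y (hi hy)
  rwa [(M.interp χ).dn_int] at this

lemma seq_bot_le (φ : Fm) : SeqValid Fm.bot φ := by
  intro M a ha
  have : a ∈ M.P.dn (M.interp φ).int :=
    fun y _ => ha y trivial
  rwa [(M.interp φ).dn_int] at this

end AuxSeq

section AuxR

variable {R : Fm → Fm → Prop}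

lemma R_top (h : IsCumulative R) (φ : Fm) : R φ Fm.top :=
  h.rw φ Fm.top φ (seq_top φ) (h.refl φ)

/-- Derived rule (AND). -/
lemma R_and_intro (h : IsCumulative R) {φ ψ χ : Fm} (h1 : R φ ψ) (h2 : R φ χ) :
    R φ (Fm.and ψ χ) := by
  have s1 : R (Fm.and φ ψ) χ := h.cm φ ψ χ h1 h2
  have s2 : R (Fm.and (Fm.and φ ψ) χ) (Fm.and ψ χ) :=
    h.rw _ _ _
      (seq_le_and (seq_trans (seq_and_left _ _) (seq_and_right φ ψ)) (seq_and_right _ _))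
      (h.refl (Fm.and (Fm.and φ ψ) χ))
  have s3 : R (Fm.and φ ψ) (Fm.and ψ χ) := h.cut (Fm.and φ ψ) χ (Fm.and ψ χ) s2 s1
  exact h.cut φ ψ (Fm.and ψ χ) s3 h1

/-- Left replacement of |~-equivalents (reciprocity). -/
lemma R_leftRepl (h : IsCumulative R) {a b c : Fm} (hab : R a b) (hba : R b a) (hac : R a c) :
    R b c := by
  have s1 : R (Fm.and a b) c := h.cm a b c hab hac
  have s2 : R (Fm.and b a) c :=
    h.lle (Fm.and a b) (Fm.and b a) c (seq_and_comm a b) (seq_and_comm b a) s1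
  exact h.cut b a c s2 hba

end AuxR

/-- A filter of formulas with respect to semantic entailment. -/
def IsFmFilter (F : Set Fm) : Prop :=
  Fm.top ∈ F ∧ (∀ a ∈ F, ∀ b ∈ F, Fm.and a b ∈ F) ∧
    (∀ a ∈ F, ∀ b, SeqValid a b → b ∈ F)

/-- An ideal of formulas with respect to semantic entailment. -/
def IsFmIdeal (J : Set Fm) : Prop :=
  Fm.bot ∈ J ∧ (∀ a ∈ J, ∀ b ∈ J, Fm.or a b ∈ J) ∧
    (∀ a ∈ J, ∀ b, SeqValid b a → b ∈ J)

/-- The canonical polarity: objects are filters, features are ideals,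
incidence is nonempty intersection. -/
def canPol : Polarity where
  Obj := {F : Set Fm // IsFmFilter F}
  Feat := {J : Set Fm // IsFmIdeal J}
  I := fun F J => ∃ χ, χ ∈ F.val ∧ χ ∈ J.val

/-- The principal filter of a formula. -/
def pFil (ψ : Fm) : canPol.Obj :=
  ⟨{χ | SeqValid ψ χ}, seq_top ψ, fun a ha b hb => seq_le_and ha hb,
    fun a ha b hb M x hx => hb M (ha M hx)⟩

/-- The principal ideal of a formula. -/
def pIdl (ψ : Fm) : canPol.Feat :=
  ⟨{χ | SeqValid χ ψ}, seq_bot_le ψ, fun a ha b hb => seq_or_le ha hb,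
    fun a ha b hb M x hx => ha M (hb M hx)⟩

/-- The canonical extension of a formula. -/
def cExt (ψ : Fm) : Set canPol.Obj := {F | ψ ∈ F.val}

/-- The canonical intension of a formula. -/
def cInt (ψ : Fm) : Set canPol.Feat := {J | ψ ∈ J.val}

lemma up_cExt (ψ : Fm) : canPol.up (cExt ψ) = cInt ψ := by
  apply Set.Subset.antisymm
  · intro J hJ
    obtain ⟨χ, hχ1, hχ2⟩ := hJ (pFil ψ) (seq_refl ψ)
    exact J.prop.2.2 χ hχ2 ψ hχ1
  · intro J hJ F hF
    exact ⟨ψ, hF, hJ⟩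

lemma dn_cInt (ψ : Fm) : canPol.dn (cInt ψ) = cExt ψ := by
  apply Set.Subset.antisymm
  · intro F hF
    obtain ⟨χ, hχ1, hχ2⟩ := hF (pIdl ψ) (seq_refl ψ)
    exact F.prop.2.2 χ hχ1 ψ hχ2
  · intro F hF J hJ
    exact ⟨ψ, hF, hJ⟩

/-- The canonical concept of a formula. -/
def cCpt (ψ : Fm) : Concept canPol :=
  ⟨cExt ψ, cInt ψ, up_cExt ψ, dn_cInt ψ⟩

lemma Concept.ext_inj {P : Polarity} {c d : Concept P} (he : c.ext = d.ext) :
    c = d := by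
  obtain ⟨e1, i1, u1, d1⟩ := c
  obtain ⟨e2, i2, u2, d2⟩ := d
  cases he
  have : i1 = i2 := by rw [← u1, ← u2]
  cases this
  rfl

lemma Concept.int_inj {P : Polarity} {c d : Concept P} (hi : c.int = d.int) :
    c = d := by
  obtain ⟨e1, i1, u1, d1⟩ := c
  obtain ⟨e2, i2, u2, d2⟩ := d
  cases hi
  have : e1 = e2 := by rw [← d1, ← d2]
  cases this
  rfl

/-- The canonical polarity-based model. -/
def canModel : Model := ⟨canPol, fun n => cCpt (Fm.var n)⟩

lemma canModel_interp (φ : Fm) : canModel.interp φ = cCpt φ := by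
  induction φ with
  | var n => rfl
  | bot =>
    apply Concept.int_inj
    show Set.univ = cInt Fm.bot
    exact (Set.eq_univ_iff_forall.mpr (fun J => J.prop.1)).symm
  | top =>
    apply Concept.ext_inj
    show Set.univ = cExt Fm.top
    exact (Set.eq_univ_iff_forall.mpr (fun F => F.prop.1)).symm
  | and φ ψ ih1 ih2 =>
    show Concept.meet (canModel.interp φ) (canModel.interp ψ) = cCpt (Fm.and φ ψ)
    rw [ih1, ih2]
    apply Concept.ext_inj
    show cExt φ ∩ cExt ψ = cExt (Fm.and φ ψ)
    apply Set.Subset.antisymm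
    · rintro F ⟨h1, h2⟩
      exact F.prop.2.1 φ h1 ψ h2
    · intro F hF
      exact ⟨F.prop.2.2 _ hF φ (seq_and_left φ ψ),
             F.prop.2.2 _ hF ψ (seq_and_right φ ψ)⟩
  | or φ ψ ih1 ih2 =>
    show Concept.join (canModel.interp φ) (canModel.interp ψ) = cCpt (Fm.or φ ψ)
    rw [ih1, ih2]
    apply Concept.int_inj
    show cInt φ ∩ cInt ψ = cInt (Fm.or φ ψ)
    apply Set.Subset.antisymm
    · rintro J ⟨h1, h2⟩
      exact J.prop.2.1 φ h1 ψ h2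
    · intro J hJ
      exact ⟨J.prop.2.2 _ hJ φ (seq_left_le_or φ ψ),
             J.prop.2.2 _ hJ ψ (seq_right_le_or φ ψ)⟩

section Super

variable {R : Fm → Fm → Prop}

/-- The consequence set of a formula is a filter. -/
lemma consSet_filter (h : IsCumulative R) (φ : Fm) :
    IsFmFilter {ψ | R φ ψ} :=
  ⟨R_top h φ, fun a ha b hb => R_and_intro h ha hb,
   fun a ha b hb => h.rw a b φ hb ha⟩

/-- The supernormal pointed model for φ. -/
def superPM (h : IsCumulative R) (φ : Fm) : PointedModel :=
  ⟨canModel, ⟨{ψ | R φ ψ}, consSet_filter h φ⟩⟩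

lemma superPM_sat (h : IsCumulative R) (φ ψ : Fm) :
    (superPM h φ).sat ψ ↔ R φ ψ := by
  show (superPM h φ).pt ∈ (canModel.interp ψ).ext ↔ R φ ψ
  rw [canModel_interp]
  rfl

/-- The equivalence a ∼ b. -/
def eqSetoid (R : Fm → Fm → Prop) (h : IsCumulative R) : Setoid Fm where
  r := fun a b => R a b ∧ R b a
  iseqv := by
    refine ⟨fun a => ⟨h.refl a, h.refl a⟩, fun hab => ⟨hab.2, hab.1⟩, ?_⟩
    rintro a b c ⟨hab, hba⟩ ⟨hbc, hcb⟩
    exact ⟨R_leftRepl h hba hab hbc, R_leftRepl h hbc hcb hba⟩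

/-- A canonical representative of the ∼-class of a formula. -/
noncomputable def rho (h : IsCumulative R) (φ : Fm) : Fm :=
  @Quotient.out Fm (eqSetoid R h) (@Quotient.mk Fm (eqSetoid R h) φ)

lemma rho_spec (h : IsCumulative R) (φ : Fm) :
    R (rho h φ) φ ∧ R φ (rho h φ) :=
  @Quotient.exact Fm (eqSetoid R h) _ _
    (@Quotient.out_eq Fm (eqSetoid R h) (@Quotient.mk Fm (eqSetoid R h) φ))

lemma rho_congr (h : IsCumulative R) {a b : Fm} (hab : R a b) (hba : R b a) :
    rho h a = rho h b := by
  have : @Quotient.mk Fm (eqSetoid R h) a = @Quotient.mk Fm (eqSetoid R h) b :=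
    Quotient.sound ⟨hab, hba⟩
  unfold rho
  rw [this]

end Super

/-- every conceptual cumulative consequence relation is
defined by some strong conceptual cumulative model (≺ asymmetric and
each φ̂ has a minimum). -/
theorem representation_strong (R : Fm → Fm → Prop) (h : IsCumulative R) :
    ∃ F : Frame, F.IsCumulativeModel ∧
      (∀ s t, F.prec s t → ¬ F.prec t s) ∧
      (∀ φ, ∃ t, IsMinimum F.prec (F.hat φ) t) ∧
      R = F.conseq := by
  classical
  let F : Frame :=
    { S := Fm
      l := fun s => {superPM h s}
      prec := fun a b => ∃ χ, a = rho h χ ∧ R b χ ∧ a ≠ b }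
  have hhat : ∀ (s ψ : Fm), s ∈ F.hat ψ ↔ R s ψ := by
    intro s ψ
    constructor
    · intro hs
      exact (superPM_sat h s ψ).1 (hs (superPM h s) rfl)
    · intro hs Ma hMa
      have : Ma = superPM h s := hMa
      rw [this]
      exact (superPM_sat h s ψ).2 hs
  have asym : ∀ s t : F.S, F.prec s t → ¬ F.prec t s := by
    rintro s t ⟨χ, hs, hb, hne⟩ ⟨χ', ht, hb', hne'⟩
    have h1 : R χ' χ :=
      R_leftRepl h (rho_spec h χ').1 (rho_spec h χ').2 (by rw [← ht]; exact hb)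
    have h2 : R χ χ' :=
      R_leftRepl h (rho_spec h χ).1 (rho_spec h χ).2 (by rw [← hs]; exact hb')
    exact hne (by rw [hs, ht, rho_congr h h2 h1])
  have hmin : ∀ φ : Fm, IsMinimum F.prec (F.hat φ) (rho h φ) := by
    intro φ
    refine ⟨(hhat _ _).2 (rho_spec h φ).1, ?_⟩
    intro s hs hne
    exact ⟨φ, rfl, (hhat _ _).1 hs, Ne.symm hne⟩
  have hminimal : ∀ φ : Fm, MinimalIn F.prec (F.hat φ) (rho h φ) := by
    intro φ
    refine ⟨(hmin φ).1, ?_⟩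
    intro s hs hps
    by_cases he : s = rho h φ
    · subst he
      obtain ⟨χ, _, _, hne⟩ := hps
      exact hne rfl
    · exact asym _ _ ((hmin φ).2 s hs he) hps
  have huniq : ∀ (φ : Fm) (s : F.S), MinimalIn F.prec (F.hat φ) s → s = rho h φ := by
    intro φ s hs
    by_contra hne
    exact hs.2 (rho h φ) (hmin φ).1 ((hmin φ).2 s hs.1 hne)
  refine ⟨F, ?_, asym, fun φ => ⟨rho h φ, hmin φ⟩, ?_⟩
  · intro φ t ht
    by_cases he : t = rho h φ
    · exact Or.inl (he ▸ hminimal φ)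
    · exact Or.inr ⟨rho h φ, hminimal φ, (hmin φ).2 t ht he⟩
  · funext φ ψ
    apply propext
    constructor
    · intro hR s hsmin
      rw [huniq φ s hsmin]
      exact (hhat _ _).2 (R_leftRepl h (rho_spec h φ).2 (rho_spec h φ).1 hR)
    · intro hc
      have h2 : R (rho h φ) ψ := (hhat _ _).1 (hc (rho h φ) (hminimal φ))
      exact R_leftRepl h (rho_spec h φ).1 (rho_spec h φ).2 h2

end DR
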